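/- Let G = (K, I; E) be a split graph, C ⊆ K, and v ∈ K \ C with |C + v| ≤ c. Suppose T_C and T_{C+v} are c-colorable sets of size at least k (with T defined as: T_X = X ∪ I if |X| < c, else X ∪ (I \ {u : X ⊆ N(u)})). Then T_C and T_{C+v} are connected by a TAR(k)-reconfiguration sequence if and only if |T_{C+v}| ≥ k + 1. -/

import Mathlib

open Finset

variable {V : Type*}

/-- `S` is a `c`-colorable vertex set in `G`. -/
def ColSet (G : SimpleGraph V) (c : ℕ) (S : Finset V) : Prop :=
  (G.induce (S : Set V)).Colorable c

/-- One TAR(k) step between `c`-colorable sets. -/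
def TARStep (G : SimpleGraph V) (c k : ℕ) [DecidableEq V] (A B : Finset V) : Prop :=
  ColSet G c A ∧ ColSet G c B ∧ k ≤ A.card ∧ k ≤ B.card ∧ (symmDiff A B).card = 1

/-- One TJ step between `c`-colorable sets. -/
def TJStep (G : SimpleGraph V) (c : ℕ) [DecidableEq V] (A B : Finset V) : Prop :=
  ColSet G c A ∧ ColSet G c B ∧ (A \ B).card = 1 ∧ (B \ A).card = 1

/-- `l` is a TAR(k)-reconfiguration sequence from `S` to `S'`. -/
def TARSeq (G : SimpleGraph V) (c k : ℕ) [DecidableEq V] (S S' : Finset V)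
    (l : List (Finset V)) : Prop :=
  l.head? = some S ∧ l.getLast? = some S' ∧ l.Chain' (TARStep G c k)

def TJSeq (G : SimpleGraph V) (c : ℕ) [DecidableEq V] (S S' : Finset V)
    (l : List (Finset V)) : Prop :=
  l.head? = some S ∧ l.getLast? = some S' ∧ l.Chain' (TJStep G c)

def TARReach (G : SimpleGraph V) (c k : ℕ) [DecidableEq V] (S S' : Finset V) : Prop :=
  ∃ l, TARSeq G c k S S' l

/-- For a split graph with independent part `I`, the canonical maximal `c`-colorable
set with clique part `C`. -/
def splitTC (G : SimpleGraph V) [DecidableEq V] [DecidableRel G.Adj]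
    (c : ℕ) (I C : Finset V) : Finset V :=
  if C.card < c then C ∪ I
  else C ∪ I.filter (fun u => ¬ ∀ v ∈ C, G.Adj v u)

/-!
Since `|C| < c`, `T_C = C ∪ I` contains `T_{C+v} - v`; when `|T_{C+v}| ≥ k + 1` one deletes
vertices of `T_C` down to `T_{C+v} - v` and then adds `v`. Conversely, if `|C + v| < c` then
`T_{C+v} = T_C + v` is automatically large enough; if `|C + v| = c` then `T_{C+v}` is maximal
`c`-colorable, so at size `k` it would be locked, while it differs from `T_C` (it contains `v`).
-/

section Reconfiguration

open Relation

variable {G : SimpleGraph V} {c k : ℕ} {A B S T : Finset V}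

theorem ColSet.mono (h : ColSet G c A) (hBA : B ⊆ A) : ColSet G c B :=
  h.of_hom (G.induceHomOfLE (Finset.coe_subset.mpr hBA)).toHom

theorem ColSet.card_le_of_isClique (h : ColSet G c S) (hT : G.IsClique (T : Set V))
    (hTS : T ⊆ S) : T.card ≤ c := by
  simpa using h.card_le_of_pairwise_adj (fun x : T => (⟨x, hTS x.2⟩ : (S : Set V)))
    fun x y hxy => hT x.2 y.2 (Subtype.coe_ne_coe.mpr hxy)

variable [DecidableEq V]

theorem tarReach_iff_reflTransGen :
    TARReach G c k S T ↔ ReflTransGen (TARStep G c k) S T := by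
  constructor
  · rintro ⟨_ | ⟨a, l⟩, hhead, hlast, hchain⟩
    · simp at hhead
    · obtain rfl : a = S := by simpa using hhead
      exact List.relationReflTransGen_of_exists_isChain_cons l hchain
        (by simpa [List.getLast?_eq_some_getLast] using hlast)
  · intro h
    obtain ⟨l, hchain, hlast⟩ := List.exists_isChain_cons_of_relationReflTransGen h
    exact ⟨S :: l, rfl, by simp [List.getLast?_eq_some_getLast, hlast], hchain⟩

theorem TARStep.symm (h : TARStep G c k A B) : TARStep G c k B A := by
  obtain ⟨hA, hB, hkA, hkB, hAB⟩ := h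
  exact ⟨hB, hA, hkB, hkA, symmDiff_comm A B ▸ hAB⟩

theorem tarStep_insert {w : V} (hw : w ∉ A) (h : ColSet G c (insert w A)) (hk : k ≤ A.card) :
    TARStep G c k A (insert w A) := by
  refine ⟨h.mono (Finset.subset_insert w A), h, hk, hk.trans (Finset.card_le_card
    (Finset.subset_insert w A)), ?_⟩
  rw [symmDiff_of_le (Finset.subset_insert w A), Finset.insert_sdiff_cancel hw,
    Finset.card_singleton]

theorem reflTransGen_tarStep_of_subset (hA : ColSet G c A) (hBA : B ⊆ A) (hk : k ≤ B.card) :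
    ReflTransGen (TARStep G c k) A B := by
  suffices ∀ D : Finset V, Disjoint B D → ColSet G c (B ∪ D) →
      ReflTransGen (TARStep G c k) (B ∪ D) B by
    simpa [Finset.union_sdiff_of_subset hBA] using
      this (A \ B) Finset.disjoint_sdiff (by rwa [Finset.union_sdiff_of_subset hBA])
  intro D
  induction D using Finset.induction_on with
  | empty => intro _ _; simpa using ReflTransGen.refl
  | insert d D hdD ih =>
    intro hdisj hcol
    rw [Finset.disjoint_insert_right] at hdisj
    rw [Finset.union_insert] at hcol ⊢
    have hd : d ∉ B ∪ D := by simp [hdisj.1, hdD]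
    have hcol' : ColSet G c (B ∪ D) := hcol.mono (Finset.subset_insert d _)
    exact .head (tarStep_insert hd hcol (hk.trans (Finset.card_le_card
      Finset.subset_union_left))).symm (ih hdisj.2 hcol')

theorem reflTransGen_tarStep_of_erase_subset {v : V} (hA : ColSet G c A) (hT : ColSet G c T)
    (hv : v ∈ T) (hTA : T.erase v ⊆ A) (hk : k + 1 ≤ T.card) :
    ReflTransGen (TARStep G c k) A T := by
  have hk' : k ≤ (T.erase v).card := by rw [Finset.card_erase_of_mem hv]; omega
  have hstep := tarStep_insert (G := G) (Finset.notMem_erase v T)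
    (by rwa [Finset.insert_erase hv]) hk'
  rw [Finset.insert_erase hv] at hstep
  exact (reflTransGen_tarStep_of_subset hA hTA hk').tail hstep

theorem not_tarStep_of_maximal (hmax : ∀ w ∉ T, ¬ ColSet G c (insert w T)) (hT : T.card ≤ k) :
    ¬ TARStep G c k B T := by
  rintro ⟨hB, -, hkB, -, hBT⟩
  rw [symmDiff_def, Finset.sup_eq_union,
    Finset.card_union_of_disjoint disjoint_sdiff_sdiff] at hBT
  rcases (B \ T).eq_empty_or_nonempty with hBT' | ⟨w, hw⟩
  · have hsub := Finset.card_sdiff_add_card_eq_card (Finset.sdiff_eq_empty_iff_subset.mp hBT')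
    rw [hBT', Finset.card_empty] at hBT
    omega
  · have hTB : T ⊆ B := Finset.sdiff_eq_empty_iff_subset.mp
      (Finset.card_eq_zero.mp (by have := Finset.card_pos.mpr ⟨w, hw⟩; omega))
    rw [Finset.mem_sdiff] at hw
    exact hmax w hw.2 (hB.mono (Finset.insert_subset hw.1 hTB))

theorem eq_of_reflTransGen_tarStep_of_maximal (h : ReflTransGen (TARStep G c k) S T)
    (hmax : ∀ w ∉ T, ¬ ColSet G c (insert w T)) (hT : T.card ≤ k) : S = T := by
  rcases h.cases_tail with h | ⟨B, -, hstep⟩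
  · exact h.symm
  · exact absurd hstep (not_tarStep_of_maximal hmax hT)

end Reconfiguration

section SplitGraph

variable {G : SimpleGraph V} [DecidableEq V] [DecidableRel G.Adj] {c : ℕ} {I C : Finset V}

theorem splitTC_of_card_lt (h : C.card < c) : splitTC G c I C = C ∪ I := if_pos h

theorem subset_splitTC : C ⊆ splitTC G c I C := by
  unfold splitTC
  split_ifs <;> exact Finset.subset_union_left

theorem splitTC_subset_union : splitTC G c I C ⊆ C ∪ I := by
  unfold splitTC
  split_ifs
  exacts [subset_rfl, Finset.union_subset_union_right (Finset.filter_subset _ _)]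

/-- Any vertex outside `splitTC G c I C` forms a clique with `C` of size `C.card + 1 > c`. -/
theorem not_colSet_insert_splitTC {K : Finset V} (hK : G.IsClique (K : Set V))
    (hcover : ∀ v : V, v ∈ K ∨ v ∈ I) (hCK : C ⊆ K) (hc : c ≤ C.card) :
    ∀ w ∉ splitTC G c I C, ¬ ColSet G c (insert w (splitTC G c I C)) := by
  intro w hw h
  have hwC : w ∉ C := fun h' => hw (subset_splitTC h')
  have hclique : G.IsClique ((insert w C : Finset V) : Set V) := by
    rw [Finset.coe_insert, SimpleGraph.isClique_insert]
    refine ⟨hK.subset hCK, fun b hb hne => ?_⟩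
    rcases hcover w with hwK | hwI
    · exact hK hwK (hCK hb) hne
    · rw [splitTC, if_neg (not_lt.mpr hc)] at hw
      simp only [Finset.mem_union, Finset.mem_filter, hwC, hwI, false_or, true_and,
        not_not] at hw
      exact (hw b hb).symm
  have := h.card_le_of_isClique hclique (Finset.insert_subset_insert w subset_splitTC)
  rw [Finset.card_insert_of_notMem hwC] at this
  omega

end SplitGraph

theorem splitTC_reachable_iff_general {V : Type*} [DecidableEq V] (G : SimpleGraph V)
    [DecidableRel G.Adj] (K I : Finset V)
    (hclique : G.IsClique K)
    (hdisj : Disjoint K I) (hcover : ∀ v : V, v ∈ K ∨ v ∈ I) (c k : ℕ)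
    (C : Finset V) (hCK : C ⊆ K) (v : V) (hvK : v ∈ K) (hvC : v ∉ C)
    (hsize : (insert v C).card ≤ c)
    (hcol : ColSet G c (splitTC G c I C)) (hcol' : ColSet G c (splitTC G c I (insert v C)))
    (hk : k ≤ (splitTC G c I C).card) :
    TARReach G c k (splitTC G c I C) (splitTC G c I (insert v C)) ↔
      k + 1 ≤ (splitTC G c I (insert v C)).card := by
  have hCc : C.card < c := by rw [Finset.card_insert_of_notMem hvC] at hsize; omega
  have hv : v ∉ splitTC G c I C := by
    rw [splitTC_of_card_lt hCc]
    simp [hvC, Finset.disjoint_left.mp hdisj hvK]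
  have hvT : v ∈ splitTC G c I (insert v C) := subset_splitTC (Finset.mem_insert_self v C)
  rw [tarReach_iff_reflTransGen]
  refine ⟨fun hreach => ?_, fun hT => ?_⟩
  · by_cases hlt : (insert v C).card < c
    · rw [splitTC_of_card_lt hlt, Finset.insert_union, ← splitTC_of_card_lt (G := G) hCc,
        Finset.card_insert_of_notMem hv]
      omega
    · by_contra hsmall
      have hlocked := not_colSet_insert_splitTC hclique hcover
        (Finset.insert_subset hvK hCK) (not_lt.mp hlt)
      exact hv (eq_of_reflTransGen_tarStep_of_maximal hreach hlocked (by omega) ▸ hvT)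
  · refine reflTransGen_tarStep_of_erase_subset hcol hcol' hvT ?_ hT
    refine (Finset.erase_subset_erase v (splitTC_subset_union (G := G))).trans ?_
    rw [splitTC_of_card_lt hCc, Finset.insert_union]
    exact Finset.erase_insert_subset v _

theorem splitTC_reachable_iff {V : Type*} [DecidableEq V] (G : SimpleGraph V)
    [DecidableRel G.Adj] (K I : Finset V)
    (hclique : G.IsClique K) (hindep : ∀ u ∈ I, ∀ v ∈ I, ¬ G.Adj u v)
    (hdisj : Disjoint K I) (hcover : ∀ v : V, v ∈ K ∨ v ∈ I) (c k : ℕ)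
    (C : Finset V) (hCK : C ⊆ K) (v : V) (hvK : v ∈ K) (hvC : v ∉ C)
    (hsize : (insert v C).card ≤ c)
    (hcol : ColSet G c (splitTC G c I C)) (hcol' : ColSet G c (splitTC G c I (insert v C)))
    (hk : k ≤ (splitTC G c I C).card) (hk' : k ≤ (splitTC G c I (insert v C)).card) :
    TARReach G c k (splitTC G c I C) (splitTC G c I (insert v C)) ↔
      k + 1 ≤ (splitTC G c I (insert v C)).card :=
  splitTC_reachable_iff_general G K I hclique hdisj hcover c k C hCK v hvK hvC hsize hcol hcol' hk
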